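/- For any finite connected simple graph G, the independence number of G is at most the number of vertices of G minus the radius of G, i.e., α(G) ≤ n(G) − r(G). -/

import Mathlib

/-- A finset of vertices is an independent set if no two of its vertices are adjacent. -/
def SimpleGraph.IsIndepFinset {V : Type*} (G : SimpleGraph V) (s : Finset V) : Prop :=
  ∀ u ∈ s, ∀ w ∈ s, u ≠ w → ¬ G.Adj u w

/-- The independence number: the largest cardinality of an independent set of vertices. -/
noncomputable def SimpleGraph.indepNum' {V : Type*} (G : SimpleGraph V) : ℕ :=
  sSup {n | ∃ s : Finset V, G.IsIndepFinset s ∧ s.card = n}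

/-- The eccentricity of a vertex: the maximum distance from it to any vertex. -/
noncomputable def SimpleGraph.eccentricity {V : Type*} [Fintype V] (G : SimpleGraph V) (v : V) : ℕ :=
  Finset.univ.sup (fun u => G.dist v u)

/-- The radius of a graph: the minimum eccentricity over all vertices. -/
noncomputable def SimpleGraph.graphRadius {V : Type*} [Fintype V] [Nonempty V]
    (G : SimpleGraph V) : ℕ :=
  Finset.univ.inf' Finset.univ_nonempty (fun v => G.eccentricity v)

/-!
Deleting edges can only increase the radius and keeps independent sets independent, so we may
pass to a spanning tree. In a tree, let `x`–`y` be a diametral path of length `d`. Its vertex `m`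
at distance `⌈d/2⌉` from `x` has eccentricity at most `⌈d/2⌉`: every vertex `u` sees `m` on a
shortest path to `x` or to `y`, and these have length at most `d`. On the other hand the `d + 1`
vertices of the path contain at least `⌈d/2⌉` vertices outside any independent set, so
`r ≤ ⌈d/2⌉ ≤ n - α`.
-/

open Finset

namespace SimpleGraph

variable {V : Type*} {G : SimpleGraph V} {u v w x y m : V}

lemma Walk.dist_add_dist_eq_of_mem_support {p : G.Walk u v} (hp : p.length = G.dist u v)
    (hw : w ∈ p.support) : G.dist u w + G.dist w v = G.dist u v := by
  obtain ⟨q, r, rfl⟩ := Walk.mem_support_iff_exists_append.mp hw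
  have hq := dist_le q
  have hr := dist_le r
  have htri := q.reachable.dist_triangle_left v
  rw [Walk.length_append] at hp
  omega

lemma Reachable.exists_dist_eq_and_dist_eq (h : G.Reachable u v) {k : ℕ}
    (hk : k ≤ G.dist u v) : ∃ w, G.dist u w = k ∧ G.dist w v = G.dist u v - k := by
  obtain ⟨p, hp⟩ := h.exists_walk_length_eq_dist
  have htake := dist_le (p.take k)
  have hdrop := dist_le (p.drop k)
  have htri := (p.take k).reachable.dist_triangle_left v
  rw [Walk.take_length] at htake
  rw [Walk.drop_length] at hdrop
  exact ⟨p.getVert k, by omega, by omega⟩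

/-- The `x`–`y` path of a tree lies in the walk `x → u → y`. -/
lemma IsTree.dist_add_dist_eq_or (hT : G.IsTree) (hm : G.dist x m + G.dist m y = G.dist x y)
    (u : V) : G.dist x m + G.dist m u = G.dist x u ∨ G.dist u m + G.dist m y = G.dist u y := by
  classical
  obtain ⟨r₁, hr₁⟩ := hT.connected.exists_walk_length_eq_dist x m
  obtain ⟨r₂, hr₂⟩ := hT.connected.exists_walk_length_eq_dist m y
  obtain ⟨q₁, hq₁⟩ := hT.connected.exists_walk_length_eq_dist x u
  obtain ⟨q₂, hq₂⟩ := hT.connected.exists_walk_length_eq_dist u y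
  have hr : (r₁.append r₂).IsPath :=
    Walk.isPath_of_length_eq_dist _ (by rw [Walk.length_append, hr₁, hr₂, hm])
  have hpath : r₁.append r₂ = (q₁.append q₂).bypass :=
    congrArg Subtype.val <|
      (hT.isAcyclic.subsingleton_path x y).elim ⟨_, hr⟩ ⟨_, (q₁.append q₂).bypass_isPath⟩
  have hmq : m ∈ (q₁.append q₂).support :=
    (q₁.append q₂).support_bypass_subset_support <| hpath ▸ by simp
  rcases (Walk.mem_support_append_iff _ _).mp hmq with h | h
  · exact .inl (Walk.dist_add_dist_eq_of_mem_support hq₁ h)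
  · exact .inr (Walk.dist_add_dist_eq_of_mem_support hq₂ h)

lemma IsTree.exists_forall_dist_le [Finite V] (hT : G.IsTree) :
    ∃ m, ∀ u, G.dist m u ≤ (G.diam + 1) / 2 := by
  have := hT.connected.nonempty
  have hdiam : G.ediam ≠ ⊤ := connected_iff_ediam_ne_top.mp hT.connected
  obtain ⟨x, y, hxy⟩ := G.exists_dist_eq_diam
  obtain ⟨m, hxm, hmy⟩ :=
    (hT.connected x y).exists_dist_eq_and_dist_eq (k := (G.diam + 1) / 2) (by omega)
  refine ⟨m, fun u => ?_⟩
  have hxu : G.dist x u ≤ G.diam := dist_le_diam hdiam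
  have huy : G.dist u y ≤ G.diam := dist_le_diam hdiam
  rcases hT.dist_add_dist_eq_or (x := x) (y := y) (m := m) (by omega) u with h | h
  · omega
  · rw [dist_comm] at h
    omega

lemma IsIndepFinset.anti {G' : SimpleGraph V} (hle : G' ≤ G) {A : Finset V}
    (hA : G.IsIndepFinset A) : G'.IsIndepFinset A :=
  fun u hu w hw hne hadj => hA u hu w hw hne (hle hadj)

lemma IsIndepFinset.length_le_two_mul_card_support_sdiff [DecidableEq V] {A : Finset V}
    (hA : G.IsIndepFinset A) {p : G.Walk u v} (hp : p.IsPath) :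
    p.length ≤ 2 * #(p.support.toFinset \ A) := by
  suffices key : ∀ {u} (p : G.Walk u v), p.IsPath →
      p.length ≤ 2 * #(p.support.toFinset \ A) ∧
        (u ∉ A → p.length + 1 ≤ 2 * #(p.support.toFinset \ A)) from (key p hp).1
  clear hp p
  intro u p hp
  induction p with
  | nil => simp +contextual [sdiff_eq_self_of_disjoint]
  | @cons u w _ huw q ih =>
    rw [Walk.cons_isPath_iff] at hp
    obtain ⟨hq, hlen⟩ := ih hp.1
    have hnotin : u ∉ q.support.toFinset \ A :=
      fun h => hp.2 (List.mem_toFinset.mp (mem_sdiff.mp h).1)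
    simp only [Walk.length_cons, Walk.support_cons, List.toFinset_cons]
    by_cases hu : u ∈ A
    · have hw : w ∉ A := fun hw => hA u hu w hw huw.ne huw
      rw [insert_sdiff_of_mem _ hu]
      exact ⟨hlen hw, fun h => absurd hu h⟩
    · rw [insert_sdiff_of_notMem _ hu, card_insert_of_notMem hnotin]
      omega

section Radius

variable [Fintype V]

lemma dist_le_eccentricity (G : SimpleGraph V) (v u : V) : G.dist v u ≤ G.eccentricity v :=
  le_sup (f := fun u => G.dist v u) (mem_univ u)

variable [Nonempty V]

lemma graphRadius_le_of_forall_dist_le {k : ℕ} (c : V) (h : ∀ u, G.dist c u ≤ k) :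
    G.graphRadius ≤ k :=
  (inf'_le _ (mem_univ c)).trans (Finset.sup_le fun u _ => h u)

lemma exists_eccentricity_eq_graphRadius (G : SimpleGraph V) :
    ∃ c, G.eccentricity c = G.graphRadius := by
  obtain ⟨c, -, hc⟩ := exists_mem_eq_inf' univ_nonempty G.eccentricity
  exact ⟨c, hc.symm⟩

lemma graphRadius_anti {G' : SimpleGraph V} (hle : G' ≤ G) (hG' : G'.Connected) :
    G.graphRadius ≤ G'.graphRadius := by
  obtain ⟨c, hc⟩ := G'.exists_eccentricity_eq_graphRadius
  exact graphRadius_le_of_forall_dist_le c fun u =>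
    ((hG' c u).dist_anti hle).trans (hc ▸ G'.dist_le_eccentricity c u)

lemma IsTree.card_add_graphRadius_le (hT : G.IsTree) {A : Finset V} (hA : G.IsIndepFinset A) :
    #A + G.graphRadius ≤ Fintype.card V := by
  classical
  obtain ⟨m, hm⟩ := hT.exists_forall_dist_le
  obtain ⟨x, y, hxy⟩ := G.exists_dist_eq_diam
  obtain ⟨p, hp, hlen⟩ := hT.connected.exists_path_of_dist x y
  have hrad := graphRadius_le_of_forall_dist_le m hm
  have hpath := hA.length_le_two_mul_card_support_sdiff hp
  have hcompl : #(p.support.toFinset \ A) ≤ #Aᶜ :=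
    card_le_card fun _ h => mem_compl.mpr (mem_sdiff.mp h).2
  rw [card_compl] at hcompl
  have := A.card_le_univ
  omega

lemma Connected.card_add_graphRadius_le (hG : G.Connected) {A : Finset V}
    (hA : G.IsIndepFinset A) : #A + G.graphRadius ≤ Fintype.card V := by
  obtain ⟨T, hTG, hT⟩ := hG.exists_isTree_le
  have := graphRadius_anti hTG hT.connected
  have := hT.card_add_graphRadius_le (hA.anti hTG)
  omega

lemma Connected.indepNum'_add_graphRadius_le (hG : G.Connected) :
    G.indepNum' + G.graphRadius ≤ Fintype.card V := by
  have hempty : G.IsIndepFinset ∅ := by simp [IsIndepFinset]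
  have hrad := hG.card_add_graphRadius_le hempty
  have : G.indepNum' ≤ Fintype.card V - G.graphRadius := by
    refine csSup_le ⟨0, ∅, hempty, rfl⟩ ?_
    rintro _ ⟨s, hs, rfl⟩
    have := hG.card_add_graphRadius_le hs
    omega
  omega

end Radius

end SimpleGraph

/-- For any finite connected simple graph, α(G) ≤ n(G) - r(G). -/
theorem indepNum_le_card_sub_radius {V : Type*} [Fintype V] [Nonempty V]
    (G : SimpleGraph V) (hG : G.Connected) :
    (G.indepNum' : ℤ) ≤ (Fintype.card V : ℤ) - (G.graphRadius : ℤ) := by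
  have := hG.indepNum'_add_graphRadius_le
  omega
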